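/- Let R be a commutative ring in which 2 is invertible and let θ be a ring automorphism of R with θ(θ(x)) = x for all x. Let I and J be ideals of R with θ(I) ⊆ I and θ(J) ⊆ J. Suppose r₁, r₂ ∈ I + J satisfy r₁·θ(r₁) = r₂ + θ(r₂). Then there exist a₁, a₂ ∈ I and b₁, b₂ ∈ J such that a₁·θ(a₁) = a₂ + θ(a₂), b₁·θ(b₁) = b₂ + θ(b₂), r₁ = a₁ + b₁, and r₂ = a₂ + b₂ + θ(a₁)·b₁. (Equivalently, 𝒜(I + J) = 𝒜(I) ⊕ 𝒜(J), where ⊕ is the operation (t,u) ⊕ (t′,u′) = (t + t′, u + u′ + θ(t)·t′).) -/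

import Mathlib

/-! Write `r₁ = a + b` and `r₂ = x + y` with `a, x ∈ I` and `b, y ∈ J`. The defect
`d = a θ(a) - (x + θ(x))` is `θ`-fixed, and it lies in `J` because the defect of `(r₁, r₂)`
vanishes and is additive for `⊕`. Correcting `x` by `d / 2` gives `a₂ = x + d / 2 ∈ I` with
`(a, a₂) ∈ 𝒜(I)`; the second component `b₂` is then forced by `r₂ = a₂ + b₂ + θ(a) b`, lies in
`J`, and additivity of the defect gives `(b, b₂) ∈ 𝒜(J)`. -/

section NormDefect

variable {R F : Type*} [CommRing R] [FunLike F R R]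

/-- `(t, u) ∈ 𝒜(J)` means `t, u ∈ J` and `normDefect θ t u = 0`. -/
def normDefect (θ : F) (t u : R) : R := t * θ t - (u + θ u)

theorem normDefect_mem {θ : F} {J : Ideal R} (hJ : ∀ x ∈ J, θ x ∈ J) {t u : R}
    (ht : t ∈ J) (hu : u ∈ J) : normDefect θ t u ∈ J :=
  J.sub_mem (J.mul_mem_right _ ht) (J.add_mem hu (hJ u hu))

variable [RingHomClass F R R]

theorem normDefect_oplus {θ : F} (hθ : ∀ x, θ (θ x) = x) (t u t' u' : R) :
    normDefect θ (t + t') (u + u' + θ t * t') = normDefect θ t u + normDefect θ t' u' := by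
  simp only [normDefect, map_add, map_mul, hθ]
  ring

theorem map_eq_self_of_two_mul_eq_one (θ : F) {e : R} (he : 2 * e = 1) : θ e = e := by
  have hθe := congrArg θ he
  rw [map_mul, map_ofNat, map_one] at hθe
  linear_combination e * hθe - θ e * he

theorem normDefect_add_half_normDefect {θ : F} (hθ : ∀ x, θ (θ x) = x) {e : R}
    (he : 2 * e = 1) (t u : R) : normDefect θ t (u + e * normDefect θ t u) = 0 := by
  have hθe := map_eq_self_of_two_mul_eq_one θ he
  unfold normDefect
  simp only [map_add, map_sub, map_mul, hθ, hθe]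
  linear_combination (-(t * θ t - (u + θ u))) * he

end NormDefect

/-- `𝒜(I + J) = 𝒜(I) ⊕ 𝒜(J)` for `θ`-invariant ideals `I`, `J` of a commutative ring with
`2` invertible and `θ` an involutive ring automorphism. -/
theorem stmt_9 {R : Type*} [CommRing R] (h2 : IsUnit (2 : R))
    (θ : R ≃+* R) (hθ : ∀ x, θ (θ x) = x)
    (I J : Ideal R) (hI : ∀ x ∈ I, θ x ∈ I) (hJ : ∀ x ∈ J, θ x ∈ J)
    (r₁ r₂ : R) (hr₁ : r₁ ∈ I + J) (hr₂ : r₂ ∈ I + J)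
    (hr : r₁ * θ r₁ = r₂ + θ r₂) :
    ∃ a₁ ∈ I, ∃ a₂ ∈ I, ∃ b₁ ∈ J, ∃ b₂ ∈ J,
      a₁ * θ a₁ = a₂ + θ a₂ ∧ b₁ * θ b₁ = b₂ + θ b₂ ∧
      r₁ = a₁ + b₁ ∧ r₂ = a₂ + b₂ + θ a₁ * b₁ := by
  obtain ⟨e, he⟩ := h2.exists_right_inv
  rw [Ideal.add_eq_sup, Submodule.mem_sup] at hr₁ hr₂
  obtain ⟨a, ha, b, hb, rfl⟩ := hr₁
  obtain ⟨x, hx, y, hy, rfl⟩ := hr₂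
  have hr0 : normDefect θ (a + b) (x + y) = 0 := sub_eq_zero.mpr hr
  have hsplit := normDefect_oplus hθ a x b (y - θ a * b)
  rw [show x + (y - θ a * b) + θ a * b = x + y by ring, hr0] at hsplit
  set d := normDefect θ a x
  have hdJ : d ∈ J := by
    rw [eq_neg_of_add_eq_zero_left hsplit.symm]
    exact J.neg_mem (normDefect_mem hJ hb (J.sub_mem hy (J.mul_mem_left _ hb)))
  have hra₂ : x + y = (x + e * d) + (y - e * d - θ a * b) + θ a * b := by ring
  have ha₂ : normDefect θ a (x + e * d) = 0 := normDefect_add_half_normDefect hθ he a x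
  have hb₂ : normDefect θ b (y - e * d - θ a * b) = 0 := by
    rwa [hra₂, normDefect_oplus hθ, ha₂, zero_add] at hr0
  refine ⟨a, ha, x + e * d, I.add_mem hx (I.mul_mem_left e (normDefect_mem hI ha hx)), b, hb,
    y - e * d - θ a * b, J.sub_mem (J.sub_mem hy (J.mul_mem_left e hdJ)) (J.mul_mem_left _ hb),
    sub_eq_zero.mp ha₂, sub_eq_zero.mp hb₂, rfl, hra₂⟩
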